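/- Let p, q ≥ 2 be coprime natural numbers and let k be a natural number with k > pq − p − q. Then there exists a unital star-algebra homomorphism from the prime dimension drop algebra I[p,pq,q] to M_k(ℂ). -/
import Mathlib


open Kronecker

/-- The prime dimension drop algebra `I[p, pq, q]`: continuous functions
`f : [0,1] → M_{pq}(ℂ)` with `f 0 = a ⊗ 1` and `f 1 = 1 ⊗ b`. -/
noncomputable def primeDimDrop (p q : ℕ) :
    StarSubalgebra ℂ C(unitInterval, Matrix (Fin p × Fin q) (Fin p × Fin q) ℂ) where
  carrier := {f |
    (∃ a : Matrix (Fin p) (Fin p) ℂ, f 0 = a ⊗ₖ (1 : Matrix (Fin q) (Fin q) ℂ)) ∧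
    (∃ b : Matrix (Fin q) (Fin q) ℂ, f 1 = (1 : Matrix (Fin p) (Fin p) ℂ) ⊗ₖ b)}
  mul_mem' := by
    rintro f g ⟨⟨a, ha⟩, ⟨b, hb⟩⟩ ⟨⟨a', ha'⟩, ⟨b', hb'⟩⟩
    have h1 : (a ⊗ₖ (1 : Matrix (Fin q) (Fin q) ℂ)) * (a' ⊗ₖ 1) = (a * a') ⊗ₖ 1 := by
      rw [← Matrix.mul_kronecker_mul, one_mul]
    have h2 : ((1 : Matrix (Fin p) (Fin p) ℂ) ⊗ₖ b) * (1 ⊗ₖ b') = 1 ⊗ₖ (b * b') := by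
      rw [← Matrix.mul_kronecker_mul, one_mul]
    exact ⟨⟨a * a', by simp [ha, ha', h1]⟩, ⟨b * b', by simp [hb, hb', h2]⟩⟩
  one_mem' := by
    exact ⟨⟨1, by simp [Matrix.one_kronecker_one]⟩, ⟨1, by simp [Matrix.one_kronecker_one]⟩⟩
  add_mem' := by
    rintro f g ⟨⟨a, ha⟩, ⟨b, hb⟩⟩ ⟨⟨a', ha'⟩, ⟨b', hb'⟩⟩
    exact ⟨⟨a + a', by simp [ha, ha', Matrix.add_kronecker]⟩,
      ⟨b + b', by simp [hb, hb', Matrix.kronecker_add]⟩⟩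
  zero_mem' := by
    exact ⟨⟨0, by simp [Matrix.zero_kronecker]⟩, ⟨0, by simp [Matrix.kronecker_zero]⟩⟩
  algebraMap_mem' := by
    intro c
    refine ⟨⟨c • 1, ?_⟩, ⟨c • 1, ?_⟩⟩ <;>
      simp [Algebra.algebraMap_eq_smul_one, Matrix.smul_kronecker,
        Matrix.kronecker_smul, Matrix.one_kronecker_one]
  star_mem' := by
    rintro f ⟨⟨a, ha⟩, ⟨b, hb⟩⟩
    have h1 : (a ⊗ₖ (1 : Matrix (Fin q) (Fin q) ℂ)).conjTranspose = a.conjTranspose ⊗ₖ 1 := by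
      ext ⟨i, j⟩ ⟨k, l⟩
      by_cases h : j = l <;> simp [Matrix.conjTranspose_apply, Matrix.one_apply, h, Ne.symm]
    have h2 : ((1 : Matrix (Fin p) (Fin p) ℂ) ⊗ₖ b).conjTranspose = 1 ⊗ₖ b.conjTranspose := by
      ext ⟨i, j⟩ ⟨k, l⟩
      by_cases h : i = k <;> simp [Matrix.conjTranspose_apply, Matrix.one_apply, h, Ne.symm]
    exact ⟨⟨a.conjTranspose, by simp [Matrix.star_eq_conjTranspose, ha, h1]⟩,
      ⟨b.conjTranspose, by simp [Matrix.star_eq_conjTranspose, hb, h2]⟩⟩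

section Aux

open Matrix

lemma kron_one_conjTranspose {a p : ℕ} (x : Matrix (Fin p) (Fin p) ℂ) :
    ((1 : Matrix (Fin a) (Fin a) ℂ) ⊗ₖ x)ᴴ = 1 ⊗ₖ xᴴ := by
  ext ⟨i, j⟩ ⟨k, l⟩
  by_cases h : i = k <;>
    simp [Matrix.conjTranspose_apply, Matrix.one_apply, h, Ne.symm]

/-- Extract the `M_p` part of a matrix on `Fin p × Fin q`. -/
def extractL (p q : ℕ) [NeZero q] (M : Matrix (Fin p × Fin q) (Fin p × Fin q) ℂ) :
    Matrix (Fin p) (Fin p) ℂ :=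
  Matrix.of fun i j => M (i, 0) (j, 0)

def extractR (p q : ℕ) [NeZero p] (M : Matrix (Fin p × Fin q) (Fin p × Fin q) ℂ) :
    Matrix (Fin q) (Fin q) ℂ :=
  Matrix.of fun i j => M (0, i) (0, j)

lemma extractL_kron {p q : ℕ} [NeZero q] (a : Matrix (Fin p) (Fin p) ℂ) :
    extractL p q (a ⊗ₖ (1 : Matrix (Fin q) (Fin q) ℂ)) = a := by
  ext i j; simp [extractL, Matrix.one_apply]

lemma extractR_kron {p q : ℕ} [NeZero p] (b : Matrix (Fin q) (Fin q) ℂ) :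
    extractR p q ((1 : Matrix (Fin p) (Fin p) ℂ) ⊗ₖ b) = b := by
  ext i j; simp [extractR, Matrix.one_apply]

/-- Evaluation at 0 followed by extraction of the `M_p` part, as a star algebra hom. -/
noncomputable def phiL (p q : ℕ) [NeZero q] :
    primeDimDrop p q →⋆ₐ[ℂ] Matrix (Fin p) (Fin p) ℂ where
  toFun f := extractL p q (f.1 0)
  map_one' := by
    have : ((1 : primeDimDrop p q) : C(unitInterval, _)) 0 =
        (1 : Matrix (Fin p) (Fin p) ℂ) ⊗ₖ (1 : Matrix (Fin q) (Fin q) ℂ) := by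
      simp [Matrix.one_kronecker_one]
    show extractL p q (((1 : primeDimDrop p q) : C(unitInterval, _)) 0) = 1
    rw [this, extractL_kron]
  map_mul' f g := by
    obtain ⟨a, ha⟩ := f.2.1
    obtain ⟨a', ha'⟩ := g.2.1
    have h : ((f * g : primeDimDrop p q) : C(unitInterval, _)) 0 =
        (a * a') ⊗ₖ (1 : Matrix (Fin q) (Fin q) ℂ) := by
      show (f.1 0) * (g.1 0) = _
      rw [ha, ha', ← Matrix.mul_kronecker_mul, one_mul]
    show extractL p q (((f * g : primeDimDrop p q) : C(unitInterval, _)) 0) =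
      extractL p q (f.1 0) * extractL p q (g.1 0)
    rw [h, extractL_kron, ha, ha', extractL_kron, extractL_kron]
  map_zero' := by ext i j; simp [extractL]
  map_add' f g := by ext i j; simp [extractL]
  commutes' c := by
    ext i j
    simp [extractL, Algebra.algebraMap_eq_smul_one, Matrix.one_apply, Prod.ext_iff]
  map_star' f := by
    ext i j
    simp [extractL, Matrix.star_eq_conjTranspose, Matrix.conjTranspose_apply]

noncomputable def phiR (p q : ℕ) [NeZero p] :
    primeDimDrop p q →⋆ₐ[ℂ] Matrix (Fin q) (Fin q) ℂ where
  toFun f := extractR p q (f.1 1)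
  map_one' := by
    have : ((1 : primeDimDrop p q) : C(unitInterval, _)) 1 =
        (1 : Matrix (Fin p) (Fin p) ℂ) ⊗ₖ (1 : Matrix (Fin q) (Fin q) ℂ) := by
      simp [Matrix.one_kronecker_one]
    show extractR p q (((1 : primeDimDrop p q) : C(unitInterval, _)) 1) = 1
    rw [this, extractR_kron]
  map_mul' f g := by
    obtain ⟨b, hb⟩ := f.2.2
    obtain ⟨b', hb'⟩ := g.2.2
    have h : ((f * g : primeDimDrop p q) : C(unitInterval, _)) 1 =
        (1 : Matrix (Fin p) (Fin p) ℂ) ⊗ₖ (b * b') := by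
      show (f.1 1) * (g.1 1) = _
      rw [hb, hb', ← Matrix.mul_kronecker_mul, one_mul]
    show extractR p q (((f * g : primeDimDrop p q) : C(unitInterval, _)) 1) =
      extractR p q (f.1 1) * extractR p q (g.1 1)
    rw [h, extractR_kron, hb, hb', extractR_kron, extractR_kron]
  map_zero' := by ext i j; simp [extractR]
  map_add' f g := by ext i j; simp [extractR]
  commutes' c := by
    ext i j
    simp [extractR, Algebra.algebraMap_eq_smul_one, Matrix.one_apply, Prod.ext_iff]
  map_star' f := by
    ext i j
    simp [extractR, Matrix.star_eq_conjTranspose, Matrix.conjTranspose_apply]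

/-- The block-diagonal star algebra hom `M_p × M_q → M_{(a×p) ⊕ (b×q)}`. -/
noncomputable def blockDiagHom (a p b q : ℕ) :
    (Matrix (Fin p) (Fin p) ℂ × Matrix (Fin q) (Fin q) ℂ) →⋆ₐ[ℂ]
      Matrix ((Fin a × Fin p) ⊕ (Fin b × Fin q)) ((Fin a × Fin p) ⊕ (Fin b × Fin q)) ℂ where
  toFun x := Matrix.fromBlocks ((1 : Matrix (Fin a) (Fin a) ℂ) ⊗ₖ x.1) 0 0
    ((1 : Matrix (Fin b) (Fin b) ℂ) ⊗ₖ x.2)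
  map_one' := by
    simp [Prod.fst_one, Prod.snd_one, Matrix.one_kronecker_one, Matrix.fromBlocks_one]
  map_mul' x y := by
    simp [Matrix.fromBlocks_multiply, ← Matrix.mul_kronecker_mul]
  map_zero' := by simp [Matrix.kronecker_zero, Matrix.fromBlocks_zero]
  map_add' x y := by
    simp [Matrix.kronecker_add, Matrix.fromBlocks_add]
  commutes' c := by
    simp only [Algebra.algebraMap_eq_smul_one, Prod.smul_fst, Prod.smul_snd, Prod.fst_one,
      Prod.snd_one, Matrix.kronecker_smul, Matrix.one_kronecker_one]
    rw [← Matrix.fromBlocks_one (l := Fin a × Fin p) (m := Fin b × Fin q) (α := ℂ)]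
    rw [Matrix.fromBlocks_smul]
    simp
  map_star' x := by
    simp [Matrix.star_eq_conjTranspose, Matrix.fromBlocks_conjTranspose,
      kron_one_conjTranspose, Prod.fst_star, Prod.snd_star]

/-- Reindexing as a star algebra hom. -/
noncomputable def reindexStarAlgHom {m n : Type*} [Fintype m] [Fintype n] [DecidableEq m]
    [DecidableEq n] (e : m ≃ n) : Matrix m m ℂ →⋆ₐ[ℂ] Matrix n n ℂ :=
  { (Matrix.reindexAlgEquiv ℂ ℂ e).toAlgHom with
    map_star' := fun M => by
      simp [Matrix.star_eq_conjTranspose, Matrix.conjTranspose_reindex] }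

end Aux

theorem primeDimDrop_embeds_in_matrix (p q k : ℕ) (hp : 2 ≤ p) (hq : 2 ≤ q)
    (hpq : Nat.Coprime p q) (hk : p * q - p - q < k) :
    Nonempty ((primeDimDrop p q) →⋆ₐ[ℂ] Matrix (Fin k) (Fin k) ℂ) := by
  have hP : NeZero p := ⟨by omega⟩
  have hQ : NeZero q := ⟨by omega⟩
  -- Chicken McNugget: k = a * p + b * q
  have hfrob := frobeniusNumber_pair hpq (by omega) (by omega)
  have hkmem : k ∈ AddSubmonoid.closure ({p, q} : Set ℕ) := by
    by_contra h
    exact absurd (hfrob.2 h) (by omega)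
  rw [AddSubmonoid.mem_closure_pair] at hkmem
  obtain ⟨a, b, hab⟩ := hkmem
  simp only [smul_eq_mul] at hab
  -- the equivalence Fin k ≃ (Fin a × Fin p) ⊕ (Fin b × Fin q)
  have e : Fin k ≃ ((Fin a × Fin p) ⊕ (Fin b × Fin q)) :=
    (finCongr hab.symm).trans <|
      (finSumFinEquiv.symm).trans <|
        Equiv.sumCongr finProdFinEquiv.symm finProdFinEquiv.symm
  exact ⟨(reindexStarAlgHom e.symm).comp
    ((blockDiagHom a p b q).comp ((phiL p q).prod (phiR p q)))⟩
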